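/- Let r > 0, H > 0, and set d₁ = r. Let s₁ = √3·d₁²/4, V₁ = s₁·H, and V₁₁ = π·(d₁ − √3·d₁/2)²·(r − (d₁ − √3·d₁/2)/3). Then 3·V₁₁/V₁ = (16√3 − 27)·π·r/(6H). -/
import Mathlib

theorem tp_overlap_ratio_closed_form (r H : ℝ) (hr : 0 < r) (hH : 0 < H)
    (d₁ s₁ V₁ V₁₁ : ℝ)
    (hd₁ : d₁ = r)
    (hs₁ : s₁ = Real.sqrt 3 * d₁ ^ 2 / 4)
    (hV₁ : V₁ = s₁ * H)
    (hV₁₁ : V₁₁ = Real.pi * (d₁ - Real.sqrt 3 * d₁ / 2) ^ 2 *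
      (r - (d₁ - Real.sqrt 3 * d₁ / 2) / 3)) :
    3 * V₁₁ / V₁ = (16 * Real.sqrt 3 - 27) * Real.pi * r / (6 * H) := by
  have hs : Real.sqrt 3 > 0 := Real.sqrt_pos.mpr (by norm_num)
  have hs2 : Real.sqrt 3 ^ 2 = 3 := Real.sq_sqrt (by norm_num)
  subst hd₁ hs₁ hV₁ hV₁₁
  rw [div_eq_div_iff (by positivity) (by positivity)]
  linear_combination (Real.pi * H * d₁ ^ 3 * (3 * Real.sqrt 3 / 4 - 4)) * hs2
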